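/- arXiv:2304.03175 — 3 statements merged into one kernel-verified Lean document; each statement's English description precedes it below -/
import Mathlib

section
/- (Factorization, Lemma 3.2 of LDC) In LDC(N≥): if Γ ⊢ a :^q A and q ≠ 0, then there exists a context Γ' with ⌊Γ'⌋ = ⌊Γ⌋ such that Γ' ⊢ a :^1 A and Γ <: q·Γ'. -/
/-!
The simply-typed calculus LDC(N≥): graded by the preordered semiring of natural
numbers with the descending order, i.e. the preorder `q <: q'` holds iff `q' ≤ q`.
-/

namespace LDC

/-- Types of LDC(N≥): `Unit`, graded functions `^r A → B`, graded products
`^r A₁ × A₂` and sums `A₁ + A₂`. -/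
inductive Ty : Type where
  | unit : Ty
  | arr : ℕ → Ty → Ty → Ty
  | prod : ℕ → Ty → Ty → Ty
  | sum : Ty → Ty → Ty

/-- Terms of LDC(N≥), with variables named by natural numbers. -/
inductive Tm : Type where
  /-- variable `x` -/
  | var : ℕ → Tm
  /-- `λ^r x:A. b` -/
  | lam : ℕ → ℕ → Ty → Tm → Tm
  /-- application `b a^r` -/
  | app : Tm → Tm → ℕ → Tm
  /-- `unit` -/
  | unit : Tm
  /-- `let_{q₀} unit be a in b` -/
  | letUnit : ℕ → Tm → Tm → Tm
  /-- `(a₁^r, a₂)` -/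
  | pair : Tm → ℕ → Tm → Tm
  /-- `let_{q₀} (x^r, y) be a in b` -/
  | letPair : ℕ → ℕ → ℕ → ℕ → Tm → Tm → Tm
  /-- `inj₁ a` -/
  | inj1 : Tm → Tm
  /-- `inj₂ a` -/
  | inj2 : Tm → Tm
  /-- `case_{q₀} a of x₁.b₁; x₂.b₂` -/
  | case : ℕ → Tm → ℕ → Tm → ℕ → Tm → Tm

/-- Free variables of a term. -/
def fv : Tm → Finset ℕ
  | .var x => {x}
  | .lam _ x _ b => fv b \ {x}
  | .app b a _ => fv b ∪ fv a
  | .unit => ∅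
  | .letUnit _ a b => fv a ∪ fv b
  | .pair a _ b => fv a ∪ fv b
  | .letPair _ x _ y a b => fv a ∪ (fv b \ {x, y})
  | .inj1 a => fv a
  | .inj2 a => fv a
  | .case _ a x₁ b₁ x₂ b₂ => fv a ∪ (fv b₁ \ {x₁}) ∪ (fv b₂ \ {x₂})

/-- Capture-avoiding substitution `a{c/z}` of `c` for the free occurrences of
`z` in `a` (binders shadowing `z` are left untouched). -/
def subst (z : ℕ) (c : Tm) : Tm → Tm
  | .var x => if x = z then c else .var x
  | .lam r x A b => .lam r x A (if x = z then b else subst z c b)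
  | .app b a r => .app (subst z c b) (subst z c a) r
  | .unit => .unit
  | .letUnit q a b => .letUnit q (subst z c a) (subst z c b)
  | .pair a r b => .pair (subst z c a) r (subst z c b)
  | .letPair q x r y a b =>
      .letPair q x r y (subst z c a) (if x = z ∨ y = z then b else subst z c b)
  | .inj1 a => .inj1 (subst z c a)
  | .inj2 a => .inj2 (subst z c a)
  | .case q a x₁ b₁ x₂ b₂ =>
      .case q (subst z c a) x₁ (if x₁ = z then b₁ else subst z c b₁)
        x₂ (if x₂ = z then b₂ else subst z c b₂)

/-- A context is a list of graded assumptions `x :^q A`. -/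
abbrev Ctx := List (ℕ × ℕ × Ty)

/-- `⌊Γ⌋`: the underlying ungraded context. -/
def floor (Γ : Ctx) : List (ℕ × Ty) := Γ.map (fun e => (e.1, e.2.2))

/-- `Γ₁ + Γ₂`: pointwise addition of grades (meaningful when `⌊Γ₁⌋ = ⌊Γ₂⌋`). -/
def ctxAdd (Γ₁ Γ₂ : Ctx) : Ctx :=
  List.zipWith (fun e₁ e₂ => (e₁.1, e₁.2.1 + e₂.2.1, e₁.2.2)) Γ₁ Γ₂

/-- `q·Γ`: multiply every grade of `Γ` by `q`. -/
def ctxSMul (q : ℕ) (Γ : Ctx) : Ctx := Γ.map (fun e => (e.1, q * e.2.1, e.2.2))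

/-- The preorder `q <: q'` of N≥, i.e. `q' ≤ q` (descending order). -/
def gradeLe (q q' : ℕ) : Prop := q' ≤ q

/-- `Γ <: Γ'`: same underlying assumptions, grades pointwise related by `<:`. -/
def ctxLe (Γ Γ' : Ctx) : Prop :=
  List.Forall₂ (fun e e' => e.1 = e'.1 ∧ e.2.2 = e'.2.2 ∧ gradeLe e.2.1 e'.2.1) Γ Γ'

/-- The typing judgment `Γ ⊢ a :^q A` of LDC(N≥). -/
inductive Typing : Ctx → Tm → ℕ → Ty → Prop where
  | var (Γ₁ Γ₂ : Ctx) (x q : ℕ) (A : Ty) :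
      Typing (ctxSMul 0 Γ₁ ++ [(x, q, A)] ++ ctxSMul 0 Γ₂) (.var x) q A
  | lam {Γ : Ctx} {b : Tm} {q : ℕ} {B : Ty} (r x : ℕ) (A : Ty) :
      Typing (Γ ++ [(x, q * r, A)]) b q B →
      Typing Γ (.lam r x A b) q (.arr r A B)
  | app {Γ₁ Γ₂ : Ctx} {b a : Tm} {q r : ℕ} {A B : Ty} :
      Typing Γ₁ b q (.arr r A B) →
      Typing Γ₂ a (q * r) A →
      floor Γ₁ = floor Γ₂ →
      Typing (ctxAdd Γ₁ Γ₂) (.app b a r) q B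
  | unit (Γ : Ctx) (q : ℕ) : Typing (ctxSMul 0 Γ) .unit q .unit
  | letUnit {Γ₁ Γ₂ : Ctx} {a b : Tm} {q q₀ : ℕ} {B : Ty} :
      Typing Γ₁ a (q * q₀) .unit →
      Typing Γ₂ b q B →
      gradeLe q₀ 1 →
      floor Γ₁ = floor Γ₂ →
      Typing (ctxAdd Γ₁ Γ₂) (.letUnit q₀ a b) q B
  | pair {Γ₁ Γ₂ : Ctx} {a₁ a₂ : Tm} {q r : ℕ} {A₁ A₂ : Ty} :
      Typing Γ₁ a₁ (q * r) A₁ →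
      Typing Γ₂ a₂ q A₂ →
      floor Γ₁ = floor Γ₂ →
      Typing (ctxAdd Γ₁ Γ₂) (.pair a₁ r a₂) q (.prod r A₁ A₂)
  | letPair {Γ₁ Γ₂ : Ctx} {a b : Tm} {q q₀ r x y : ℕ} {A₁ A₂ B : Ty} :
      Typing Γ₁ a (q * q₀) (.prod r A₁ A₂) →
      Typing (Γ₂ ++ [(x, q * q₀ * r, A₁), (y, q * q₀, A₂)]) b q B →
      gradeLe q₀ 1 →
      floor Γ₁ = floor Γ₂ →
      Typing (ctxAdd Γ₁ Γ₂) (.letPair q₀ x r y a b) q B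
  | inj1 {Γ : Ctx} {a₁ : Tm} {q : ℕ} {A₁ : Ty} (A₂ : Ty) :
      Typing Γ a₁ q A₁ → Typing Γ (.inj1 a₁) q (.sum A₁ A₂)
  | inj2 {Γ : Ctx} {a₂ : Tm} {q : ℕ} {A₂ : Ty} (A₁ : Ty) :
      Typing Γ a₂ q A₂ → Typing Γ (.inj2 a₂) q (.sum A₁ A₂)
  | case {Γ₁ Γ₂ : Ctx} {a b₁ b₂ : Tm} {q q₀ x₁ x₂ : ℕ} {A₁ A₂ B : Ty} :
      Typing Γ₁ a (q * q₀) (.sum A₁ A₂) →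
      Typing (Γ₂ ++ [(x₁, q * q₀, A₁)]) b₁ q B →
      Typing (Γ₂ ++ [(x₂, q * q₀, A₂)]) b₂ q B →
      gradeLe q₀ 1 →
      floor Γ₁ = floor Γ₂ →
      Typing (ctxAdd Γ₁ Γ₂) (.case q₀ a x₁ b₁ x₂ b₂) q B
  | subL {Γ Γ' : Ctx} {a : Tm} {q : ℕ} {A : Ty} :
      Typing Γ' a q A → ctxLe Γ Γ' → Typing Γ a q A
  | subR {Γ : Ctx} {a : Tm} {q q' : ℕ} {A : Ty} :
      Typing Γ a q A → gradeLe q q' → Typing Γ a q' A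

/-- Values: λ-abstractions, `unit`, pairs and injections. -/
def IsValue : Tm → Prop
  | .lam _ _ _ _ => True
  | .unit => True
  | .pair _ _ _ => True
  | .inj1 _ => True
  | .inj2 _ => True
  | _ => False

/-- Call-by-name small-step reduction `⊢ a ⇝ a'`. -/
inductive Step : Tm → Tm → Prop where
  | appBeta (r x : ℕ) (A : Ty) (b a : Tm) :
      Step (.app (.lam r x A b) a r) (subst x a b)
  | letUnitBeta (q₀ : ℕ) (b : Tm) :
      Step (.letUnit q₀ .unit b) b
  | letPairBeta (q₀ x r y : ℕ) (a₁ a₂ b : Tm) :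
      Step (.letPair q₀ x r y (.pair a₁ r a₂) b) (subst y a₂ (subst x a₁ b))
  | caseBeta1 (q₀ : ℕ) (a₁ : Tm) (x₁ : ℕ) (b₁ : Tm) (x₂ : ℕ) (b₂ : Tm) :
      Step (.case q₀ (.inj1 a₁) x₁ b₁ x₂ b₂) (subst x₁ a₁ b₁)
  | caseBeta2 (q₀ : ℕ) (a₂ : Tm) (x₁ : ℕ) (b₁ : Tm) (x₂ : ℕ) (b₂ : Tm) :
      Step (.case q₀ (.inj2 a₂) x₁ b₁ x₂ b₂) (subst x₂ a₂ b₂)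
  | appCong {b b' : Tm} (a : Tm) (r : ℕ) :
      Step b b' → Step (.app b a r) (.app b' a r)
  | letUnitCong {a a' : Tm} (q₀ : ℕ) (b : Tm) :
      Step a a' → Step (.letUnit q₀ a b) (.letUnit q₀ a' b)
  | letPairCong {a a' : Tm} (q₀ x r y : ℕ) (b : Tm) :
      Step a a' → Step (.letPair q₀ x r y a b) (.letPair q₀ x r y a' b)
  | caseCong {a a' : Tm} (q₀ x₁ : ℕ) (b₁ : Tm) (x₂ : ℕ) (b₂ : Tm) :
      Step a a' → Step (.case q₀ a x₁ b₁ x₂ b₂) (.case q₀ a' x₁ b₁ x₂ b₂)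

/-- A heap is a list of weighted bindings `x ↦^q a`. -/
abbrev Heap := List (ℕ × ℕ × Tm)

/-- The set of variables bound in a heap. -/
def heapDom (H : Heap) : Finset ℕ := (H.map Prod.fst).toFinset

/-- The heap reduction judgment `[H] a ⟹^q_S [H'] a'` of LDC(N≥). -/
inductive HeapStep : Heap → Tm → ℕ → Finset ℕ → Heap → Tm → Prop where
  | var {H₁ H₂ : Heap} {x r q : ℕ} {a : Tm} {S : Finset ℕ} :
      q ≠ 0 →
      HeapStep (H₁ ++ [(x, r + q, a)] ++ H₂) (.var x) q S (H₁ ++ [(x, r, a)] ++ H₂) a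
  | discard {H H' : Heap} {a a' : Tm} {q q' : ℕ} {S : Finset ℕ} :
      HeapStep H a q S H' a' → gradeLe q q' → HeapStep H a q' S H' a'
  | appCong {H H' : Heap} {b b' : Tm} {q : ℕ} {S : Finset ℕ} (a : Tm) (r : ℕ) :
      HeapStep H b q (S ∪ fv a) H' b' →
      HeapStep H (.app b a r) q S H' (.app b' a r)
  | letUnitCong {H H' : Heap} {a a' : Tm} {q : ℕ} {S : Finset ℕ} (q₀ : ℕ) (b : Tm) :
      HeapStep H a q (S ∪ fv b) H' a' →
      HeapStep H (.letUnit q₀ a b) q S H' (.letUnit q₀ a' b)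
  | letPairCong {H H' : Heap} {a a' : Tm} {q : ℕ} {S : Finset ℕ} (q₀ x r y : ℕ) (b : Tm) :
      HeapStep H a q (S ∪ fv b) H' a' →
      HeapStep H (.letPair q₀ x r y a b) q S H' (.letPair q₀ x r y a' b)
  | caseCong {H H' : Heap} {a a' : Tm} {q : ℕ} {S : Finset ℕ} (q₀ x₁ : ℕ) (b₁ : Tm) (x₂ : ℕ) (b₂ : Tm) :
      HeapStep H a q (S ∪ fv b₁ ∪ fv b₂) H' a' →
      HeapStep H (.case q₀ a x₁ b₁ x₂ b₂) q S H' (.case q₀ a' x₁ b₁ x₂ b₂)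
  | appBeta {H : Heap} {S : Finset ℕ} (r x : ℕ) (A : Ty) (b a : Tm) (q : ℕ) {x' : ℕ} :
      x' ∉ S → x' ∉ heapDom H →
      HeapStep H (.app (.lam r x A b) a r) q S
        (H ++ [(x', q * r, a)]) (subst x (.var x') b)
  | letUnitBeta {H : Heap} {S : Finset ℕ} (q₀ : ℕ) (b : Tm) (q : ℕ) :
      HeapStep H (.letUnit q₀ .unit b) q S H b
  | letPairBeta {H : Heap} {S : Finset ℕ} (q₀ x r y : ℕ) (a₁ a₂ b : Tm) (q : ℕ) {x' y' : ℕ} :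
      x' ∉ S → x' ∉ heapDom H → y' ∉ S → y' ∉ heapDom H → x' ≠ y' →
      HeapStep H (.letPair q₀ x r y (.pair a₁ r a₂) b) q S
        (H ++ [(x', q * q₀ * r, a₁), (y', q * q₀, a₂)])
        (subst y (.var y') (subst x (.var x') b))
  | caseBeta1 {H : Heap} {S : Finset ℕ} (q₀ : ℕ) (a₁ : Tm) (x₁ : ℕ) (b₁ : Tm) (x₂ : ℕ) (b₂ : Tm) (q : ℕ) {x' : ℕ} :
      x' ∉ S → x' ∉ heapDom H →
      HeapStep H (.case q₀ (.inj1 a₁) x₁ b₁ x₂ b₂) q S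
        (H ++ [(x', q * q₀, a₁)]) (subst x₁ (.var x') b₁)
  | caseBeta2 {H : Heap} {S : Finset ℕ} (q₀ : ℕ) (a₂ : Tm) (x₁ : ℕ) (b₁ : Tm) (x₂ : ℕ) (b₂ : Tm) (q : ℕ) {x' : ℕ} :
      x' ∉ S → x' ∉ heapDom H →
      HeapStep H (.case q₀ (.inj2 a₂) x₁ b₁ x₂ b₂) q S
        (H ++ [(x', q * q₀, a₂)]) (subst x₂ (.var x') b₂)

/-- The compatibility judgment `H ⊨ Γ` between heaps and contexts. -/
inductive Compat : Heap → Ctx → Prop where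
  | nil : Compat [] []
  | cons {H : Heap} {Γ Γ₀ : Ctx} {x q : ℕ} {a : Tm} {A : Ty} :
      floor Γ₀ = floor Γ →
      Typing Γ₀ a q A →
      Compat H (ctxAdd Γ Γ₀) →
      Compat (H ++ [(x, q, a)]) (Γ ++ [(x, q, A)])

/-- `n` successive heap reduction steps at grade `q`, where at each step the
support set is the domain of the current heap together with the free
variables of the current term. -/
inductive HeapSteps : Heap → Tm → ℕ → ℕ → Heap → Tm → Prop where
  | refl (H : Heap) (a : Tm) (q : ℕ) : HeapSteps H a q 0 H a
  | step {H H' H'' : Heap} {a a' a'' : Tm} {q n : ℕ} :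
      HeapStep H a q (heapDom H ∪ fv a) H' a' →
      HeapSteps H' a' q n H'' a'' →
      HeapSteps H a q (n + 1) H'' a''

end LDC

/-!
Induction on the derivation, proving more generally that `Γ ⊢ a :^{q·r} A` with `q ≠ 0`
factors as `Θ ⊢ a :^r A` with `Γ <: q·Θ`: for every rule except `SubR` the grades of the
premises are again multiples of `q`, and binder grades `q·g` are cancelled to `g`. For `SubR`
(`q·r ≤ p`) one factors through `p` itself and rescales by `r`, or, if `r = 0`, takes `0·Γ`
by the multiplication lemma. The two branches of a `case` are typed in a common
context: the pointwise maximum of the two, which is below both in the descending order.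
-/

theorem List.Forall₂.exists_append_of_append_left {α β : Type*} {R : α → β → Prop}
    {l₁ l₂ : List α} {m : List β} (h : List.Forall₂ R (l₁ ++ l₂) m) :
    ∃ m₁ m₂, m = m₁ ++ m₂ ∧ List.Forall₂ R l₁ m₁ ∧ List.Forall₂ R l₂ m₂ := by
  induction l₁ generalizing m with
  | nil => exact ⟨[], m, rfl, .nil, h⟩
  | cons a l₁ ih =>
    obtain _ | ⟨hab, h⟩ := h
    obtain ⟨m₁, m₂, rfl, h₁, h₂⟩ := ih h
    exact ⟨_ :: m₁, m₂, rfl, .cons hab h₁, h₂⟩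

namespace LDC

theorem floor_ctxSMul (q : ℕ) (Γ : Ctx) : floor (ctxSMul q Γ) = floor Γ := by
  simp [floor, ctxSMul]

theorem ctxSMul_append (q : ℕ) (Γ₁ Γ₂ : Ctx) :
    ctxSMul q (Γ₁ ++ Γ₂) = ctxSMul q Γ₁ ++ ctxSMul q Γ₂ :=
  List.map_append

theorem ctxSMul_nil (q : ℕ) : ctxSMul q [] = [] :=
  rfl

theorem ctxSMul_cons (q x g : ℕ) (A : Ty) (Γ : Ctx) :
    ctxSMul q ((x, g, A) :: Γ) = (x, q * g, A) :: ctxSMul q Γ :=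
  rfl

theorem ctxSMul_ctxSMul (q r : ℕ) (Γ : Ctx) : ctxSMul q (ctxSMul r Γ) = ctxSMul (q * r) Γ := by
  simp [ctxSMul, Nat.mul_assoc]

theorem ctxSMul_ctxAdd (q : ℕ) (Γ₁ Γ₂ : Ctx) :
    ctxSMul q (ctxAdd Γ₁ Γ₂) = ctxAdd (ctxSMul q Γ₁) (ctxSMul q Γ₂) := by
  simp [ctxSMul, ctxAdd, List.map_zipWith, List.zipWith_map, Nat.mul_add]

theorem ctxLe_refl (Γ : Ctx) : ctxLe Γ Γ :=
  List.forall₂_same.2 fun _ _ => ⟨rfl, rfl, le_refl _⟩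

theorem ctxLe.trans {Γ₁ Γ₂ Γ₃ : Ctx} (h₁₂ : ctxLe Γ₁ Γ₂) (h₂₃ : ctxLe Γ₂ Γ₃) : ctxLe Γ₁ Γ₃ := by
  induction h₁₂ generalizing Γ₃ with
  | nil => exact h₂₃
  | cons h _ ih =>
    obtain _ | ⟨h', t⟩ := h₂₃
    exact .cons ⟨h.1.trans h'.1, h.2.1.trans h'.2.1, h'.2.2.trans h.2.2⟩ (ih t)

theorem ctxLe.floor_eq {Γ Γ' : Ctx} (h : ctxLe Γ Γ') : floor Γ = floor Γ' := by
  induction h with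
  | nil => rfl
  | cons h _ ih => simp only [floor, List.map_cons] at ih ⊢; rw [ih, h.1, h.2.1]

theorem ctxLe.add {Γ₁ Γ₁' Γ₂ Γ₂' : Ctx} (h₁ : ctxLe Γ₁ Γ₁') (h₂ : ctxLe Γ₂ Γ₂') :
    ctxLe (ctxAdd Γ₁ Γ₂) (ctxAdd Γ₁' Γ₂') := by
  induction h₁ generalizing Γ₂ Γ₂' with
  | nil => exact .nil
  | cons h _ ih =>
    obtain _ | ⟨h', t⟩ := h₂
    · exact .nil
    · exact .cons ⟨h.1, h.2.1, Nat.add_le_add h.2.2 h'.2.2⟩ (ih t)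

theorem ctxLe.smul {Γ Γ' : Ctx} (h : ctxLe Γ Γ') (q : ℕ) :
    ctxLe (ctxSMul q Γ) (ctxSMul q Γ') :=
  List.forall₂_map_left_iff.2 <| List.forall₂_map_right_iff.2 <|
    h.imp fun _ _ h => ⟨h.1, h.2.1, Nat.mul_le_mul_left q h.2.2⟩

theorem ctxLe.of_smul {q : ℕ} (hq : q ≠ 0) {Γ Γ' : Ctx}
    (h : ctxLe (ctxSMul q Γ) (ctxSMul q Γ')) : ctxLe Γ Γ' :=
  (List.forall₂_map_right_iff.1 (List.forall₂_map_left_iff.1 h)).imp fun _ _ h =>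
    ⟨h.1, h.2.1, Nat.le_of_mul_le_mul_left h.2.2 (Nat.pos_of_ne_zero hq)⟩

theorem ctxSMul_le_ctxSMul {q q' : ℕ} (h : q' ≤ q) (Γ : Ctx) :
    ctxLe (ctxSMul q Γ) (ctxSMul q' Γ) :=
  List.forall₂_map_left_iff.2 <| List.forall₂_map_right_iff.2 <|
    List.forall₂_same.2 fun _ _ => ⟨rfl, rfl, Nat.mul_le_mul_right _ h⟩

theorem ctxLe_ctxSMul_zero (Γ : Ctx) : ctxLe Γ (ctxSMul 0 Γ) :=
  List.forall₂_map_right_iff.2 <| List.forall₂_same.2 fun _ _ => ⟨rfl, rfl, by simp [gradeLe]⟩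

theorem ctxLe.floor_eq_of_ctxSMul {q : ℕ} {Γ Θ : Ctx} (h : ctxLe Γ (ctxSMul q Θ)) :
    floor Γ = floor Θ :=
  h.floor_eq.trans (floor_ctxSMul q Θ)

theorem floor_eq_of_ctxLe_ctxSMul {q : ℕ} {Γ₁ Γ₂ Θ₁ Θ₂ : Ctx} (h₁ : ctxLe Γ₁ (ctxSMul q Θ₁))
    (h₂ : ctxLe Γ₂ (ctxSMul q Θ₂)) (hf : floor Γ₁ = floor Γ₂) : floor Θ₁ = floor Θ₂ :=
  h₁.floor_eq_of_ctxSMul.symm.trans (hf.trans h₂.floor_eq_of_ctxSMul)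

theorem ctxLe_ctxSMul_ctxAdd {q : ℕ} {Γ₁ Γ₂ Θ₁ Θ₂ : Ctx} (h₁ : ctxLe Γ₁ (ctxSMul q Θ₁))
    (h₂ : ctxLe Γ₂ (ctxSMul q Θ₂)) : ctxLe (ctxAdd Γ₁ Γ₂) (ctxSMul q (ctxAdd Θ₁ Θ₂)) :=
  ctxSMul_ctxAdd q Θ₁ Θ₂ ▸ h₁.add h₂

theorem exists_append_of_ctxLe_append {q : ℕ} (hq : q ≠ 0) {Γ E Δ : Ctx}
    (h : ctxLe (Γ ++ ctxSMul q E) (ctxSMul q Δ)) :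
    ∃ Δ₀ D, Δ = Δ₀ ++ D ∧ ctxLe Γ (ctxSMul q Δ₀) ∧ ctxLe E D := by
  obtain ⟨m₁, m₂, hm, h₁, h₂⟩ := List.Forall₂.exists_append_of_append_left h
  obtain ⟨Δ₀, D, rfl, rfl, rfl⟩ := List.map_eq_append_iff.1 hm
  exact ⟨Δ₀, D, rfl, h₁, ctxLe.of_smul hq h₂⟩

theorem exists_ctxLe_of_ctxLe_ctxSMul {q : ℕ} {Γ Δ₁ Δ₂ : Ctx}
    (h₁ : ctxLe Γ (ctxSMul q Δ₁)) (h₂ : ctxLe Γ (ctxSMul q Δ₂)) :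
    ∃ Δ, ctxLe Δ Δ₁ ∧ ctxLe Δ Δ₂ ∧ ctxLe Γ (ctxSMul q Δ) := by
  simp only [ctxLe, ctxSMul, List.forall₂_map_right_iff] at h₁ h₂
  induction h₁ generalizing Δ₂ with
  | nil => cases h₂; exact ⟨[], .nil, .nil, .nil⟩
  | @cons e d₁ _ _ h _ ih =>
    cases h₂ with | @cons _ d₂ _ _ h' t =>
    obtain ⟨Δ, l₁, l₂, l⟩ := ih t
    refine ⟨(d₁.1, max d₁.2.1 d₂.2.1, d₁.2.2) :: Δ,
      .cons ⟨rfl, rfl, le_max_left d₁.2.1 d₂.2.1⟩ l₁,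
      .cons ⟨h.1.symm.trans h'.1, h.2.1.symm.trans h'.2.1, le_max_right d₁.2.1 d₂.2.1⟩ l₂,
      .cons ⟨h.1, h.2.1, ?_⟩ l⟩
    exact (Nat.mul_max_mul_left _ _ _).symm.trans_le (max_le h.2.2 h'.2.2)

theorem Typing.smul {Γ : Ctx} {a : Tm} {q : ℕ} {A : Ty} (h : Typing Γ a q A) (s : ℕ) :
    Typing (ctxSMul s Γ) a (s * q) A := by
  induction h with
  | var Γ₁ Γ₂ x q A =>
    simpa only [ctxSMul_append, ctxSMul_cons, ctxSMul_nil, ctxSMul_ctxSMul, Nat.mul_zero]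
      using Typing.var Γ₁ Γ₂ x (s * q) A
  | unit Γ q => simpa [ctxSMul_ctxSMul] using Typing.unit Γ (s * q)
  | lam r x A _ ih =>
    exact .lam r x A (by simpa only [ctxSMul_append, ctxSMul_cons, ctxSMul_nil, Nat.mul_assoc] using ih)
  | app _ _ hf ih₁ ih₂ =>
    rw [ctxSMul_ctxAdd]
    exact .app ih₁ (by simpa [Nat.mul_assoc] using ih₂) (by simp [floor_ctxSMul, hf])
  | letUnit _ _ h₀ hf ih₁ ih₂ =>
    rw [ctxSMul_ctxAdd]
    exact .letUnit (by simpa [Nat.mul_assoc] using ih₁) ih₂ h₀ (by simp [floor_ctxSMul, hf])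
  | pair _ _ hf ih₁ ih₂ =>
    rw [ctxSMul_ctxAdd]
    exact .pair (by simpa [Nat.mul_assoc] using ih₁) ih₂ (by simp [floor_ctxSMul, hf])
  | letPair _ _ h₀ hf ih₁ ih₂ =>
    rw [ctxSMul_ctxAdd]
    exact .letPair (by simpa [Nat.mul_assoc] using ih₁)
      (by simpa only [ctxSMul_append, ctxSMul_cons, ctxSMul_nil, Nat.mul_assoc] using ih₂) h₀
      (by simp [floor_ctxSMul, hf])
  | inj1 A₂ _ ih => exact .inj1 A₂ ih
  | inj2 A₁ _ ih => exact .inj2 A₁ ih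
  | case _ _ _ h₀ hf ih ih₁ ih₂ =>
    rw [ctxSMul_ctxAdd]
    exact .case (by simpa [Nat.mul_assoc] using ih)
      (by simpa only [ctxSMul_append, ctxSMul_cons, ctxSMul_nil, Nat.mul_assoc] using ih₁)
      (by simpa only [ctxSMul_append, ctxSMul_cons, ctxSMul_nil, Nat.mul_assoc] using ih₂) h₀
      (by simp [floor_ctxSMul, hf])
  | subL _ hle ih => exact .subL ih (hle.smul s)
  | subR _ hle ih => exact .subR ih (Nat.mul_le_mul_left s hle)

theorem exists_typing_of_ctxLe_append {q r : ℕ} (hq : q ≠ 0) {Γ E Θ : Ctx} {b : Tm} {B : Ty}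
    (hb : Typing Θ b r B) (h : ctxLe (Γ ++ ctxSMul q E) (ctxSMul q Θ)) :
    ∃ Θ₀, Typing (Θ₀ ++ E) b r B ∧ ctxLe Γ (ctxSMul q Θ₀) := by
  obtain ⟨Θ₀, D, rfl, hΓ, hE⟩ := exists_append_of_ctxLe_append hq h
  exact ⟨Θ₀, hb.subL (List.rel_append (ctxLe_refl Θ₀) hE), hΓ⟩

theorem exists_typing_of_ctxLe_append₂ {q r : ℕ} (hq : q ≠ 0) {Γ E₁ E₂ Θ₁ Θ₂ : Ctx}
    {b₁ b₂ : Tm} {B : Ty} (hb₁ : Typing Θ₁ b₁ r B) (hb₂ : Typing Θ₂ b₂ r B)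
    (h₁ : ctxLe (Γ ++ ctxSMul q E₁) (ctxSMul q Θ₁))
    (h₂ : ctxLe (Γ ++ ctxSMul q E₂) (ctxSMul q Θ₂)) :
    ∃ Θ, Typing (Θ ++ E₁) b₁ r B ∧ Typing (Θ ++ E₂) b₂ r B ∧ ctxLe Γ (ctxSMul q Θ) := by
  obtain ⟨Θ₁, hb₁, h₁⟩ := exists_typing_of_ctxLe_append hq hb₁ h₁
  obtain ⟨Θ₂, hb₂, h₂⟩ := exists_typing_of_ctxLe_append hq hb₂ h₂
  obtain ⟨Θ, hΘ₁, hΘ₂, h⟩ := exists_ctxLe_of_ctxLe_ctxSMul h₁ h₂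
  exact ⟨Θ, hb₁.subL (List.rel_append hΘ₁ (ctxLe_refl _)),
    hb₂.subL (List.rel_append hΘ₂ (ctxLe_refl _)), h⟩

theorem Typing.exists_factor_of_mul_le {Γ : Ctx} {a : Tm} {p : ℕ} {A : Ty} (h : Typing Γ a p A)
    (hfactor : p ≠ 0 → ∃ Δ, Typing Δ a 1 A ∧ ctxLe Γ (ctxSMul p Δ))
    {q r : ℕ} (hle : q * r ≤ p) (hq : q ≠ 0) :
    ∃ Θ, Typing Θ a r A ∧ ctxLe Γ (ctxSMul q Θ) := by
  rcases Nat.eq_zero_or_pos r with rfl | hr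
  · refine ⟨ctxSMul 0 Γ, by simpa using h.smul 0, ?_⟩
    simpa only [ctxSMul_ctxSMul, Nat.mul_zero] using ctxLe_ctxSMul_zero Γ
  · obtain ⟨Δ, ha, hΓ⟩ := hfactor ((Nat.mul_pos (Nat.pos_of_ne_zero hq) hr).trans_le hle).ne'
    refine ⟨ctxSMul r Δ, by simpa using ha.smul r, ?_⟩
    rw [ctxSMul_ctxSMul]
    exact hΓ.trans (ctxSMul_le_ctxSMul hle Δ)

theorem Typing.exists_factor {Γ : Ctx} {a : Tm} {p : ℕ} {A : Ty} (h : Typing Γ a p A)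
    {q r : ℕ} (hp : p = q * r) (hq : q ≠ 0) :
    ∃ Θ, Typing Θ a r A ∧ ctxLe Γ (ctxSMul q Θ) := by
  induction h generalizing q r with
  | var Γ₁ Γ₂ x p A =>
    subst hp
    refine ⟨_, .var Γ₁ Γ₂ x r A, ?_⟩
    simpa only [ctxSMul_append, ctxSMul_cons, ctxSMul_nil, ctxSMul_ctxSMul, Nat.mul_zero]
      using ctxLe_refl _
  | unit Γ p => exact ⟨_, .unit Γ r, by simpa [ctxSMul_ctxSMul] using ctxLe_refl _⟩
  | lam r' x A _ ih =>
    subst hp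
    obtain ⟨Θ, hb, hle⟩ := ih rfl hq
    rw [Nat.mul_assoc] at hle
    obtain ⟨Θ₀, hb, hΓ⟩ := exists_typing_of_ctxLe_append (E := [(x, r * r', A)]) hq hb hle
    exact ⟨Θ₀, .lam r' x A hb, hΓ⟩
  | app _ _ hf ih₁ ih₂ =>
    subst hp
    obtain ⟨Θ₁, hb, hle₁⟩ := ih₁ rfl hq
    obtain ⟨Θ₂, ha, hle₂⟩ := ih₂ (Nat.mul_assoc _ _ _) hq
    exact ⟨ctxAdd Θ₁ Θ₂, .app hb ha (floor_eq_of_ctxLe_ctxSMul hle₁ hle₂ hf),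
      ctxLe_ctxSMul_ctxAdd hle₁ hle₂⟩
  | letUnit _ _ h₀ hf ih₁ ih₂ =>
    subst hp
    obtain ⟨Θ₁, ha, hle₁⟩ := ih₁ (Nat.mul_assoc _ _ _) hq
    obtain ⟨Θ₂, hb, hle₂⟩ := ih₂ rfl hq
    exact ⟨ctxAdd Θ₁ Θ₂, .letUnit ha hb h₀ (floor_eq_of_ctxLe_ctxSMul hle₁ hle₂ hf),
      ctxLe_ctxSMul_ctxAdd hle₁ hle₂⟩
  | pair _ _ hf ih₁ ih₂ =>
    subst hp
    obtain ⟨Θ₁, ha₁, hle₁⟩ := ih₁ (Nat.mul_assoc _ _ _) hq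
    obtain ⟨Θ₂, ha₂, hle₂⟩ := ih₂ rfl hq
    exact ⟨ctxAdd Θ₁ Θ₂, .pair ha₁ ha₂ (floor_eq_of_ctxLe_ctxSMul hle₁ hle₂ hf),
      ctxLe_ctxSMul_ctxAdd hle₁ hle₂⟩
  | @letPair _ _ _ _ _ q₀ r' x y A₁ A₂ _ _ _ h₀ hf ih₁ ih₂ =>
    subst hp
    obtain ⟨Θ₁, ha, hle₁⟩ := ih₁ (Nat.mul_assoc _ _ _) hq
    obtain ⟨Θ, hb, hle⟩ := ih₂ rfl hq
    obtain ⟨Θ₂, hb, hle₂⟩ := exists_typing_of_ctxLe_append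
      (E := [(x, r * q₀ * r', A₁), (y, r * q₀, A₂)]) hq hb
      (by simpa only [ctxSMul_cons, ctxSMul_nil, Nat.mul_assoc] using hle)
    exact ⟨ctxAdd Θ₁ Θ₂, .letPair ha hb h₀ (floor_eq_of_ctxLe_ctxSMul hle₁ hle₂ hf),
      ctxLe_ctxSMul_ctxAdd hle₁ hle₂⟩
  | inj1 A₂ _ ih => exact (ih hp hq).imp fun _ ⟨ha, hle⟩ => ⟨.inj1 A₂ ha, hle⟩
  | inj2 A₁ _ ih => exact (ih hp hq).imp fun _ ⟨ha, hle⟩ => ⟨.inj2 A₁ ha, hle⟩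
  | @case _ _ _ _ _ _ q₀ x₁ x₂ A₁ A₂ _ _ _ _ h₀ hf ih ih₁ ih₂ =>
    subst hp
    obtain ⟨Θ₁, ha, hle₁⟩ := ih (Nat.mul_assoc _ _ _) hq
    obtain ⟨Θa, hb₁, hlea⟩ := ih₁ rfl hq
    obtain ⟨Θb, hb₂, hleb⟩ := ih₂ rfl hq
    rw [Nat.mul_assoc] at hlea hleb
    obtain ⟨Θ₂, hb₁, hb₂, hle₂⟩ := exists_typing_of_ctxLe_append₂
      (E₁ := [(x₁, r * q₀, A₁)]) (E₂ := [(x₂, r * q₀, A₂)]) hq hb₁ hb₂ hlea hleb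
    exact ⟨ctxAdd Θ₁ Θ₂, .case ha hb₁ hb₂ h₀ (floor_eq_of_ctxLe_ctxSMul hle₁ hle₂ hf),
      ctxLe_ctxSMul_ctxAdd hle₁ hle₂⟩
  | subL _ hle ih => exact (ih hp hq).imp fun _ ⟨ha, hle'⟩ => ⟨ha, hle.trans hle'⟩
  | subR h hle ih => exact h.exists_factor_of_mul_le (ih (Nat.mul_one _).symm) (hp ▸ hle) hq

end LDC

/-- **Factorization (Lemma 3.2 of LDC).** In LDC(N≥): if `Γ ⊢ a :^q A` and
`q ≠ 0`, then there exists a context `Γ'` with `⌊Γ'⌋ = ⌊Γ⌋` such that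
`Γ' ⊢ a :^1 A` and `Γ <: q·Γ'`. -/
theorem LDC.factorization {Γ : LDC.Ctx} {a : LDC.Tm} {q : ℕ} {A : LDC.Ty}
    (h : LDC.Typing Γ a q A) (hq : q ≠ 0) :
    ∃ Γ' : LDC.Ctx, LDC.floor Γ' = LDC.floor Γ ∧
      LDC.Typing Γ' a 1 A ∧ LDC.ctxLe Γ (LDC.ctxSMul q Γ') := by
  obtain ⟨Γ', ha, hle⟩ := h.exists_factor (Nat.mul_one q).symm hq
  exact ⟨Γ', hle.floor_eq_of_ctxSMul.symm, ha, hle⟩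
end

section
/- (Progress, Theorem 3.2 of LDC) In LDC(N≥): if ∅ ⊢ a :^q A (typing in the empty context), then either a is a value or there exists a' such that ⊢ a ⇝ a'. -/
/-!
The simply-typed calculus LDC(N≥): graded by the preordered semiring of natural
numbers with the descending order, i.e. the preorder `q <: q'` holds iff `q' ≤ q`.
-/

namespace LDC

lemma floor_len {Γ₁ Γ₂ : Ctx} (h : floor Γ₁ = floor Γ₂) : Γ₁.length = Γ₂.length := by
  have := congrArg List.length h
  simpa [floor] using this

lemma ctxAdd_nil {Γ₁ Γ₂ : Ctx} (h : ctxAdd Γ₁ Γ₂ = []) (hf : floor Γ₁ = floor Γ₂) :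
    Γ₁ = [] ∧ Γ₂ = [] := by
  have hl := floor_len hf
  have := congrArg List.length h
  simp [ctxAdd] at this
  rcases this with rfl | rfl
  · exact ⟨rfl, List.eq_nil_of_length_eq_zero (by simpa using hl.symm)⟩
  · exact ⟨List.eq_nil_of_length_eq_zero (by simpa using hl), rfl⟩

lemma ctxLe_nil {Γ' : Ctx} (h : ctxLe [] Γ') : Γ' = [] := by
  cases h; rfl

lemma canonical {Γ : Ctx} {v : Tm} {q : ℕ} {A : Ty} (h : Typing Γ v q A) (hv : IsValue v) :
    (∀ r A₁ B, A = .arr r A₁ B → ∃ x A' b, v = .lam r x A' b) ∧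
    (A = .unit → v = .unit) ∧
    (∀ r A₁ A₂, A = .prod r A₁ A₂ → ∃ a₁ a₂, v = .pair a₁ r a₂) ∧
    (∀ A₁ A₂, A = .sum A₁ A₂ → (∃ a, v = .inj1 a) ∨ ∃ a, v = .inj2 a) := by
  induction h with
  | var => simp [IsValue] at hv
  | lam r x A _ _ =>
      refine ⟨?_, ?_, ?_, ?_⟩ <;> intros <;> try (rename_i heq; cases heq)
      exact ⟨_, _, _, rfl⟩
  | app => simp [IsValue] at hv
  | unit =>
      refine ⟨?_, fun _ => rfl, ?_, ?_⟩
      · intro _ _ _ heq; cases heq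
      · intro _ _ _ heq; cases heq
      · intro _ _ heq; cases heq
  | letUnit => simp [IsValue] at hv
  | pair =>
      refine ⟨?_, ?_, ?_, ?_⟩ <;> intros <;> try (rename_i heq; cases heq)
      exact ⟨_, _, rfl⟩
  | letPair => simp [IsValue] at hv
  | inj1 =>
      refine ⟨?_, ?_, ?_, ?_⟩ <;> intros <;> try (rename_i heq; cases heq)
      exact Or.inl ⟨_, rfl⟩
  | inj2 =>
      refine ⟨?_, ?_, ?_, ?_⟩ <;> intros <;> try (rename_i heq; cases heq)
      exact Or.inr ⟨_, rfl⟩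
  | case => simp [IsValue] at hv
  | subL _ _ ih => exact ih hv
  | subR _ _ ih => exact ih hv

lemma progressAux {Γ : Ctx} {a : Tm} {q : ℕ} {A : Ty} (h : Typing Γ a q A) :
    Γ = [] → IsValue a ∨ ∃ a' : Tm, Step a a' := by
  induction h with
  | var Γ₁ Γ₂ x q A => intro h; simp at h
  | lam => intro _; left; trivial
  | app hb ha hf ihb iha =>
      intro hΓ
      obtain ⟨h1, h2⟩ := ctxAdd_nil hΓ hf
      rcases ihb h1 with hv | ⟨b', hs⟩
      · obtain ⟨x, A', b, rfl⟩ := (canonical hb hv).1 _ _ _ rfl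
        exact Or.inr ⟨_, Step.appBeta _ _ _ _ _⟩
      · exact Or.inr ⟨_, Step.appCong _ _ hs⟩
  | unit => intro _; left; trivial
  | letUnit ha hb _ hf iha ihb =>
      intro hΓ
      obtain ⟨h1, h2⟩ := ctxAdd_nil hΓ hf
      rcases iha h1 with hv | ⟨a', hs⟩
      · have := (canonical ha hv).2.1 rfl
        subst this
        exact Or.inr ⟨_, Step.letUnitBeta _ _⟩
      · exact Or.inr ⟨_, Step.letUnitCong _ _ hs⟩
  | pair => intro _; left; trivial
  | letPair ha hb _ hf iha ihb =>
      intro hΓ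
      obtain ⟨h1, h2⟩ := ctxAdd_nil hΓ hf
      rcases iha h1 with hv | ⟨a', hs⟩
      · obtain ⟨a₁, a₂, rfl⟩ := (canonical ha hv).2.2.1 _ _ _ rfl
        exact Or.inr ⟨_, Step.letPairBeta _ _ _ _ _ _ _⟩
      · exact Or.inr ⟨_, Step.letPairCong _ _ _ _ _ hs⟩
  | inj1 => intro _; left; trivial
  | inj2 => intro _; left; trivial
  | case ha hb1 hb2 _ hf iha ihb1 ihb2 =>
      intro hΓ
      obtain ⟨h1, h2⟩ := ctxAdd_nil hΓ hf
      rcases iha h1 with hv | ⟨a', hs⟩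
      · rcases (canonical ha hv).2.2.2 _ _ rfl with ⟨a₁, rfl⟩ | ⟨a₂, rfl⟩
        · exact Or.inr ⟨_, Step.caseBeta1 _ _ _ _ _ _⟩
        · exact Or.inr ⟨_, Step.caseBeta2 _ _ _ _ _ _⟩
      · exact Or.inr ⟨_, Step.caseCong _ _ _ _ _ hs⟩
  | subL _ hle ih =>
      intro hΓ; subst hΓ; exact ih (ctxLe_nil hle)
  | subR _ _ ih => exact ih

end LDC

/-- **Progress (Theorem 3.2 of LDC).** In LDC(N≥): if `∅ ⊢ a :^q A` (typing in
the empty context), then either `a` is a value or there exists `a'` such that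
`⊢ a ⇝ a'`. -/
theorem LDC.progress {a : LDC.Tm} {q : ℕ} {A : LDC.Ty}
    (h : LDC.Typing [] a q A) :
    LDC.IsValue a ∨ ∃ a' : LDC.Tm, LDC.Step a a' := by
  exact LDC.progressAux h rfl
end

section
/- (Restricted Upgrading Lemma of LDC) In LDC(𝓛) for an arbitrary lattice 𝓛 with ⊤ and ⊥: if Γ₁, x :^m A, Γ₂ ⊢ b :^ℓ B and ℓ₀ ⊑ ℓ, then Γ₁, x :^{ℓ₀ ⊔ m} A, Γ₂ ⊢ b :^ℓ B. -/
/-!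
The simply-typed calculus LDC(𝓛): graded by an arbitrary lattice
`𝓛 = (L, ⊓, ⊔, ⊤, ⊥, ⊑)` with greatest element `⊤` and least element `⊥`.
-/

namespace LDCL

/-- Types of LDC(𝓛): `Unit`, labelled functions `^m A → B`, labelled products
`^m A₁ × A₂` and sums `A₁ + A₂`, with labels drawn from `L`. -/
inductive Ty (L : Type) : Type where
  | unit : Ty L
  | arr : L → Ty L → Ty L → Ty L
  | prod : L → Ty L → Ty L → Ty L
  | sum : Ty L → Ty L → Ty L

/-- Terms of LDC(𝓛), with variables named by natural numbers. -/
inductive Tm (L : Type) : Type where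
  /-- variable `x` -/
  | var : ℕ → Tm L
  /-- `λ^m x:A. b` -/
  | lam : L → ℕ → Ty L → Tm L → Tm L
  /-- application `b a^m` -/
  | app : Tm L → Tm L → L → Tm L
  /-- `unit` -/
  | unit : Tm L
  /-- `let unit be a in b` -/
  | letUnit : Tm L → Tm L → Tm L
  /-- `(a₁^m, a₂)` -/
  | pair : Tm L → L → Tm L → Tm L
  /-- `let (x^m, y) be a in b` -/
  | letPair : ℕ → L → ℕ → Tm L → Tm L → Tm L
  /-- `inj₁ a` -/
  | inj1 : Tm L → Tm L
  /-- `inj₂ a` -/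
  | inj2 : Tm L → Tm L
  /-- `case a of x₁.b₁; x₂.b₂` -/
  | case : Tm L → ℕ → Tm L → ℕ → Tm L → Tm L

variable {L : Type}

/-- Free variables of a term. -/
def fv : Tm L → Finset ℕ
  | .var x => {x}
  | .lam _ x _ b => fv b \ {x}
  | .app b a _ => fv b ∪ fv a
  | .unit => ∅
  | .letUnit a b => fv a ∪ fv b
  | .pair a _ b => fv a ∪ fv b
  | .letPair x _ y a b => fv a ∪ (fv b \ {x, y})
  | .inj1 a => fv a
  | .inj2 a => fv a
  | .case a x₁ b₁ x₂ b₂ => fv a ∪ (fv b₁ \ {x₁}) ∪ (fv b₂ \ {x₂})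

/-- Capture-avoiding substitution `a{c/z}` of `c` for the free occurrences of
`z` in `a` (binders shadowing `z` are left untouched). -/
def subst (z : ℕ) (c : Tm L) : Tm L → Tm L
  | .var x => if x = z then c else .var x
  | .lam m x A b => .lam m x A (if x = z then b else subst z c b)
  | .app b a m => .app (subst z c b) (subst z c a) m
  | .unit => .unit
  | .letUnit a b => .letUnit (subst z c a) (subst z c b)
  | .pair a m b => .pair (subst z c a) m (subst z c b)
  | .letPair x m y a b =>
      .letPair x m y (subst z c a) (if x = z ∨ y = z then b else subst z c b)
  | .inj1 a => .inj1 (subst z c a)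
  | .inj2 a => .inj2 (subst z c a)
  | .case a x₁ b₁ x₂ b₂ =>
      .case (subst z c a) x₁ (if x₁ = z then b₁ else subst z c b₁)
        x₂ (if x₂ = z then b₂ else subst z c b₂)

/-- A context is a list of labelled assumptions `x :^ℓ A`. -/
abbrev Ctx (L : Type) := List (ℕ × L × Ty L)

/-- `⌊Γ⌋`: the underlying unlabelled context. -/
def floor (Γ : Ctx L) : List (ℕ × Ty L) := Γ.map (fun e => (e.1, e.2.2))

variable [Lattice L] [BoundedOrder L]

/-- `Γ₁ ⊓ Γ₂`: pointwise meet of labels (meaningful when `⌊Γ₁⌋ = ⌊Γ₂⌋`). -/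
def ctxMeet (Γ₁ Γ₂ : Ctx L) : Ctx L :=
  List.zipWith (fun e₁ e₂ => (e₁.1, e₁.2.1 ⊓ e₂.2.1, e₁.2.2)) Γ₁ Γ₂

/-- `ℓ ⊔ Γ`: join `ℓ` onto every label of `Γ`. -/
def ctxJoin (ℓ : L) (Γ : Ctx L) : Ctx L := Γ.map (fun e => (e.1, ℓ ⊔ e.2.1, e.2.2))

/-- `Γ ⊑ Γ'`: same underlying assumptions, labels pointwise related by `⊑`. -/
def ctxLe (Γ Γ' : Ctx L) : Prop :=
  List.Forall₂ (fun e e' => e.1 = e'.1 ∧ e.2.2 = e'.2.2 ∧ e.2.1 ≤ e'.2.1) Γ Γ'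

/-- The typing judgment `Γ ⊢ a :^ℓ A` of LDC(𝓛). -/
inductive Typing : Ctx L → Tm L → L → Ty L → Prop where
  | var (Γ₁ Γ₂ : Ctx L) (x : ℕ) (ℓ : L) (A : Ty L) :
      Typing (ctxJoin ⊤ Γ₁ ++ [(x, ℓ, A)] ++ ctxJoin ⊤ Γ₂) (.var x) ℓ A
  | lam {Γ : Ctx L} {b : Tm L} {ℓ : L} {B : Ty L} (m : L) (x : ℕ) (A : Ty L) :
      Typing (Γ ++ [(x, ℓ ⊔ m, A)]) b ℓ B →
      Typing Γ (.lam m x A b) ℓ (.arr m A B)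
  | app {Γ₁ Γ₂ : Ctx L} {b a : Tm L} {ℓ m : L} {A B : Ty L} :
      Typing Γ₁ b ℓ (.arr m A B) →
      Typing Γ₂ a (ℓ ⊔ m) A →
      floor Γ₁ = floor Γ₂ →
      Typing (ctxMeet Γ₁ Γ₂) (.app b a m) ℓ B
  | unit (Γ : Ctx L) (ℓ : L) : Typing (ctxJoin ⊤ Γ) .unit ℓ .unit
  | letUnit {Γ₁ Γ₂ : Ctx L} {a b : Tm L} {ℓ : L} {B : Ty L} :
      Typing Γ₁ a ℓ .unit →
      Typing Γ₂ b ℓ B →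
      floor Γ₁ = floor Γ₂ →
      Typing (ctxMeet Γ₁ Γ₂) (.letUnit a b) ℓ B
  | pair {Γ₁ Γ₂ : Ctx L} {a₁ a₂ : Tm L} {ℓ m : L} {A₁ A₂ : Ty L} :
      Typing Γ₁ a₁ (ℓ ⊔ m) A₁ →
      Typing Γ₂ a₂ ℓ A₂ →
      floor Γ₁ = floor Γ₂ →
      Typing (ctxMeet Γ₁ Γ₂) (.pair a₁ m a₂) ℓ (.prod m A₁ A₂)
  | letPair {Γ₁ Γ₂ : Ctx L} {a b : Tm L} {ℓ m : L} {x y : ℕ} {A₁ A₂ B : Ty L} :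
      Typing Γ₁ a ℓ (.prod m A₁ A₂) →
      Typing (Γ₂ ++ [(x, ℓ ⊔ m, A₁), (y, ℓ, A₂)]) b ℓ B →
      floor Γ₁ = floor Γ₂ →
      Typing (ctxMeet Γ₁ Γ₂) (.letPair x m y a b) ℓ B
  | inj1 {Γ : Ctx L} {a₁ : Tm L} {ℓ : L} {A₁ : Ty L} (A₂ : Ty L) :
      Typing Γ a₁ ℓ A₁ → Typing Γ (.inj1 a₁) ℓ (.sum A₁ A₂)
  | inj2 {Γ : Ctx L} {a₂ : Tm L} {ℓ : L} {A₂ : Ty L} (A₁ : Ty L) :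
      Typing Γ a₂ ℓ A₂ → Typing Γ (.inj2 a₂) ℓ (.sum A₁ A₂)
  | case {Γ₁ Γ₂ : Ctx L} {a b₁ b₂ : Tm L} {ℓ : L} {x₁ x₂ : ℕ} {A₁ A₂ B : Ty L} :
      Typing Γ₁ a ℓ (.sum A₁ A₂) →
      Typing (Γ₂ ++ [(x₁, ℓ, A₁)]) b₁ ℓ B →
      Typing (Γ₂ ++ [(x₂, ℓ, A₂)]) b₂ ℓ B →
      floor Γ₁ = floor Γ₂ →
      Typing (ctxMeet Γ₁ Γ₂) (.case a x₁ b₁ x₂ b₂) ℓ B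
  | subL {Γ Γ' : Ctx L} {a : Tm L} {ℓ : L} {A : Ty L} :
      Typing Γ' a ℓ A → ctxLe Γ Γ' → Typing Γ a ℓ A
  | subR {Γ : Ctx L} {a : Tm L} {ℓ ℓ' : L} {A : Ty L} :
      Typing Γ a ℓ A → ℓ ≤ ℓ' → Typing Γ a ℓ' A

/-- Values: λ-abstractions, `unit`, pairs and injections. -/
def IsValue : Tm L → Prop
  | .lam _ _ _ _ => True
  | .unit => True
  | .pair _ _ _ => True
  | .inj1 _ => True
  | .inj2 _ => True
  | _ => False

/-- Call-by-name small-step reduction `⊢ a ⇝ a'`. -/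
inductive Step : Tm L → Tm L → Prop where
  | appBeta (m : L) (x : ℕ) (A : Ty L) (b a : Tm L) :
      Step (.app (.lam m x A b) a m) (subst x a b)
  | letUnitBeta (b : Tm L) :
      Step (.letUnit .unit b) b
  | letPairBeta (x : ℕ) (m : L) (y : ℕ) (a₁ a₂ b : Tm L) :
      Step (.letPair x m y (.pair a₁ m a₂) b) (subst y a₂ (subst x a₁ b))
  | caseBeta1 (a₁ : Tm L) (x₁ : ℕ) (b₁ : Tm L) (x₂ : ℕ) (b₂ : Tm L) :
      Step (.case (.inj1 a₁) x₁ b₁ x₂ b₂) (subst x₁ a₁ b₁)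
  | caseBeta2 (a₂ : Tm L) (x₁ : ℕ) (b₁ : Tm L) (x₂ : ℕ) (b₂ : Tm L) :
      Step (.case (.inj2 a₂) x₁ b₁ x₂ b₂) (subst x₂ a₂ b₂)
  | appCong {b b' : Tm L} (a : Tm L) (m : L) :
      Step b b' → Step (.app b a m) (.app b' a m)
  | letUnitCong {a a' : Tm L} (b : Tm L) :
      Step a a' → Step (.letUnit a b) (.letUnit a' b)
  | letPairCong {a a' : Tm L} (x : ℕ) (m : L) (y : ℕ) (b : Tm L) :
      Step a a' → Step (.letPair x m y a b) (.letPair x m y a' b)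
  | caseCong {a a' : Tm L} (x₁ : ℕ) (b₁ : Tm L) (x₂ : ℕ) (b₂ : Tm L) :
      Step a a' → Step (.case a x₁ b₁ x₂ b₂) (.case a' x₁ b₁ x₂ b₂)

/-- A heap is a list of weighted bindings `x ↦^ℓ a`. -/
abbrev Heap (L : Type) := List (ℕ × L × Tm L)

/-- The set of variables bound in a heap. -/
def heapDom (H : Heap L) : Finset ℕ := (H.map Prod.fst).toFinset

/-- The heap reduction judgment `[H] a ⟹^ℓ_S [H'] a'` of LDC(𝓛). -/
inductive HeapStep : Heap L → Tm L → L → Finset ℕ → Heap L → Tm L → Prop where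
  | var {H₁ H₂ : Heap L} {x : ℕ} {m ℓ : L} {a : Tm L} {S : Finset ℕ} :
      ℓ ≠ ⊤ →
      HeapStep (H₁ ++ [(x, m ⊓ ℓ, a)] ++ H₂) (.var x) ℓ S (H₁ ++ [(x, m, a)] ++ H₂) a
  | discard {H H' : Heap L} {a a' : Tm L} {ℓ ℓ' : L} {S : Finset ℕ} :
      HeapStep H a ℓ S H' a' → ℓ ≤ ℓ' → HeapStep H a ℓ' S H' a'
  | appCong {H H' : Heap L} {b b' : Tm L} {ℓ : L} {S : Finset ℕ} (a : Tm L) (m : L) :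
      HeapStep H b ℓ (S ∪ fv a) H' b' →
      HeapStep H (.app b a m) ℓ S H' (.app b' a m)
  | letUnitCong {H H' : Heap L} {a a' : Tm L} {ℓ : L} {S : Finset ℕ} (b : Tm L) :
      HeapStep H a ℓ (S ∪ fv b) H' a' →
      HeapStep H (.letUnit a b) ℓ S H' (.letUnit a' b)
  | letPairCong {H H' : Heap L} {a a' : Tm L} {ℓ : L} {S : Finset ℕ}
      (x : ℕ) (m : L) (y : ℕ) (b : Tm L) :
      HeapStep H a ℓ (S ∪ fv b) H' a' →
      HeapStep H (.letPair x m y a b) ℓ S H' (.letPair x m y a' b)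
  | caseCong {H H' : Heap L} {a a' : Tm L} {ℓ : L} {S : Finset ℕ}
      (x₁ : ℕ) (b₁ : Tm L) (x₂ : ℕ) (b₂ : Tm L) :
      HeapStep H a ℓ (S ∪ fv b₁ ∪ fv b₂) H' a' →
      HeapStep H (.case a x₁ b₁ x₂ b₂) ℓ S H' (.case a' x₁ b₁ x₂ b₂)
  | appBeta {H : Heap L} {S : Finset ℕ} (m : L) (x : ℕ) (A : Ty L) (b a : Tm L)
      (ℓ : L) {x' : ℕ} :
      x' ∉ S → x' ∉ heapDom H →
      HeapStep H (.app (.lam m x A b) a m) ℓ S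
        (H ++ [(x', ℓ ⊔ m, a)]) (subst x (.var x') b)
  | letUnitBeta {H : Heap L} {S : Finset ℕ} (b : Tm L) (ℓ : L) :
      HeapStep H (.letUnit .unit b) ℓ S H b
  | letPairBeta {H : Heap L} {S : Finset ℕ} (x : ℕ) (m : L) (y : ℕ)
      (a₁ a₂ b : Tm L) (ℓ : L) {x' y' : ℕ} :
      x' ∉ S → x' ∉ heapDom H → y' ∉ S → y' ∉ heapDom H → x' ≠ y' →
      HeapStep H (.letPair x m y (.pair a₁ m a₂) b) ℓ S
        (H ++ [(x', ℓ ⊔ m, a₁), (y', ℓ, a₂)])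
        (subst y (.var y') (subst x (.var x') b))
  | caseBeta1 {H : Heap L} {S : Finset ℕ} (a₁ : Tm L) (x₁ : ℕ) (b₁ : Tm L)
      (x₂ : ℕ) (b₂ : Tm L) (ℓ : L) {x' : ℕ} :
      x' ∉ S → x' ∉ heapDom H →
      HeapStep H (.case (.inj1 a₁) x₁ b₁ x₂ b₂) ℓ S
        (H ++ [(x', ℓ, a₁)]) (subst x₁ (.var x') b₁)
  | caseBeta2 {H : Heap L} {S : Finset ℕ} (a₂ : Tm L) (x₁ : ℕ) (b₁ : Tm L)
      (x₂ : ℕ) (b₂ : Tm L) (ℓ : L) {x' : ℕ} :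
      x' ∉ S → x' ∉ heapDom H →
      HeapStep H (.case (.inj2 a₂) x₁ b₁ x₂ b₂) ℓ S
        (H ++ [(x', ℓ, a₂)]) (subst x₂ (.var x') b₂)

/-- The compatibility judgment `H ⊨ Γ` between heaps and contexts. -/
inductive Compat : Heap L → Ctx L → Prop where
  | nil : Compat [] []
  | cons {H : Heap L} {Γ Γ₀ : Ctx L} {x : ℕ} {ℓ : L} {a : Tm L} {A : Ty L} :
      floor Γ₀ = floor Γ →
      Typing Γ₀ a ℓ A →
      Compat H (ctxMeet Γ Γ₀) →
      Compat (H ++ [(x, ℓ, a)]) (Γ ++ [(x, ℓ, A)])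

/-- `n` successive heap reduction steps at label `ℓ`, where at each step the
support set is the domain of the current heap together with the free
variables of the current term. -/
inductive HeapSteps : Heap L → Tm L → L → ℕ → Heap L → Tm L → Prop where
  | refl (H : Heap L) (a : Tm L) (ℓ : L) : HeapSteps H a ℓ 0 H a
  | step {H H' H'' : Heap L} {a a' a'' : Tm L} {ℓ : L} {n : ℕ} :
      HeapStep H a ℓ (heapDom H ∪ fv a) H' a' →
      HeapSteps H' a' ℓ n H'' a'' →
      HeapSteps H a ℓ (n + 1) H'' a''

end LDCL

/-!
Upgrading: joining `ℓ₀` onto every label of a derivation, context and grade alike, preserves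
typability, since each rule commutes with `ℓ₀ ⊔ -`; for the context meets of the binary rules
only up to `⊑` (`ℓ₀ ⊔ (a ⊓ b) ⊑ (ℓ₀ ⊔ a) ⊓ (ℓ₀ ⊔ b)`), which SubL absorbs. When `ℓ₀ ⊑ ℓ` the
upgraded grade `ℓ₀ ⊔ ℓ` is `ℓ` again, and `Γ₁, x :^{ℓ₀ ⊔ m} A, Γ₂` lies below the upgraded
context `ℓ₀ ⊔ (Γ₁, x :^m A, Γ₂)`, so one more use of SubL gives the restricted form.
-/

namespace LDCL

section Contexts

variable {L : Type} [Lattice L]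

theorem ctxLe_refl (Γ : Ctx L) : ctxLe Γ Γ :=
  List.forall₂_same.mpr fun _ _ => ⟨rfl, rfl, le_rfl⟩

theorem ctxLe.append {Γ₁ Γ₁' Γ₂ Γ₂' : Ctx L} (h₁ : ctxLe Γ₁ Γ₁') (h₂ : ctxLe Γ₂ Γ₂') :
    ctxLe (Γ₁ ++ Γ₂) (Γ₁' ++ Γ₂') :=
  List.rel_append h₁ h₂

theorem ctxLe.ctxJoin {Γ Γ' : Ctx L} (ℓ : L) (h : ctxLe Γ Γ') :
    ctxLe (ctxJoin ℓ Γ) (ctxJoin ℓ Γ') := by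
  simp only [LDCL.ctxJoin, ctxLe, List.forall₂_map_left_iff, List.forall₂_map_right_iff]
  exact h.imp fun _ _ ⟨hx, hA, hle⟩ => ⟨hx, hA, sup_le_sup_left hle ℓ⟩

theorem ctxLe_ctxJoin_self (ℓ : L) (Γ : Ctx L) : ctxLe Γ (ctxJoin ℓ Γ) := by
  simp only [ctxJoin, ctxLe, List.forall₂_map_right_iff]
  exact List.forall₂_same.mpr fun _ _ => ⟨rfl, rfl, le_sup_right⟩

theorem ctxJoin_ctxMeet_le (ℓ : L) (Γ₁ Γ₂ : Ctx L) :
    ctxLe (ctxJoin ℓ (ctxMeet Γ₁ Γ₂)) (ctxMeet (ctxJoin ℓ Γ₁) (ctxJoin ℓ Γ₂)) := by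
  induction Γ₁ generalizing Γ₂ with
  | nil => exact List.Forall₂.nil
  | cons e₁ Γ₁ ih =>
    cases Γ₂ with
    | nil => exact List.Forall₂.nil
    | cons e₂ Γ₂ =>
      exact .cons ⟨rfl, rfl, le_inf (sup_le_sup_left inf_le_left ℓ)
        (sup_le_sup_left inf_le_right ℓ)⟩ (ih Γ₂)

theorem ctxJoin_append (ℓ : L) (Γ Δ : Ctx L) :
    ctxJoin ℓ (Γ ++ Δ) = ctxJoin ℓ Γ ++ ctxJoin ℓ Δ :=
  List.map_append

theorem floor_ctxJoin (ℓ : L) (Γ : Ctx L) : floor (ctxJoin ℓ Γ) = floor Γ := by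
  simp only [floor, ctxJoin, List.map_map, Function.comp_def]

end Contexts

variable {L : Type} [Lattice L] [BoundedOrder L]

theorem ctxJoin_ctxJoin_top (ℓ : L) (Γ : Ctx L) : ctxJoin ℓ (ctxJoin ⊤ Γ) = ctxJoin ⊤ Γ := by
  simp only [ctxJoin, List.map_map, Function.comp_def, top_sup_eq, sup_top_eq]

theorem Typing.upgrade {Γ : Ctx L} {b : Tm L} {ℓ : L} {B : Ty L}
    (h : Typing Γ b ℓ B) (ℓ₀ : L) : Typing (ctxJoin ℓ₀ Γ) b (ℓ₀ ⊔ ℓ) B := by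
  induction h with
  | var Γ₁ Γ₂ x ℓ A =>
    rw [ctxJoin_append, ctxJoin_append, ctxJoin_ctxJoin_top, ctxJoin_ctxJoin_top]
    exact .var Γ₁ Γ₂ x (ℓ₀ ⊔ ℓ) A
  | lam m x A _ ih =>
    rw [ctxJoin_append] at ih
    exact .lam m x A (by rwa [sup_assoc])
  | app _ _ hf ih₁ ih₂ =>
    refine .subL (.app ih₁ (by rwa [sup_assoc]) ?_) (ctxJoin_ctxMeet_le ℓ₀ _ _)
    rw [floor_ctxJoin, floor_ctxJoin, hf]
  | unit Γ ℓ =>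
    rw [ctxJoin_ctxJoin_top]
    exact .unit Γ (ℓ₀ ⊔ ℓ)
  | letUnit _ _ hf ih₁ ih₂ =>
    refine .subL (.letUnit ih₁ ih₂ ?_) (ctxJoin_ctxMeet_le ℓ₀ _ _)
    rw [floor_ctxJoin, floor_ctxJoin, hf]
  | pair _ _ hf ih₁ ih₂ =>
    refine .subL (.pair (by rwa [sup_assoc]) ih₂ ?_) (ctxJoin_ctxMeet_le ℓ₀ _ _)
    rw [floor_ctxJoin, floor_ctxJoin, hf]
  | letPair _ _ hf ih₁ ih₂ =>
    rw [ctxJoin_append] at ih₂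
    refine .subL (.letPair ih₁ (by rwa [sup_assoc]) ?_) (ctxJoin_ctxMeet_le ℓ₀ _ _)
    rw [floor_ctxJoin, floor_ctxJoin, hf]
  | inj1 A₂ _ ih => exact .inj1 A₂ ih
  | inj2 A₁ _ ih => exact .inj2 A₁ ih
  | case _ _ _ hf ih₁ ih₂ ih₃ =>
    rw [ctxJoin_append] at ih₂ ih₃
    refine .subL (.case ih₁ ih₂ ih₃ ?_) (ctxJoin_ctxMeet_le ℓ₀ _ _)
    rw [floor_ctxJoin, floor_ctxJoin, hf]
  | subL _ hle ih => exact .subL ih (ctxLe.ctxJoin ℓ₀ hle)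
  | subR _ hle ih => exact .subR ih (sup_le_sup_left hle ℓ₀)

end LDCL

/-- **Restricted Upgrading (Lemma of LDC).** In LDC(𝓛) for an arbitrary
lattice `𝓛` with `⊤` and `⊥`: if `Γ₁, x :^m A, Γ₂ ⊢ b :^ℓ B` and `ℓ₀ ⊑ ℓ`,
then `Γ₁, x :^{ℓ₀ ⊔ m} A, Γ₂ ⊢ b :^ℓ B`. -/
theorem LDCL.restricted_upgrading {L : Type} [Lattice L] [BoundedOrder L]
    {Γ₁ Γ₂ : LDCL.Ctx L} {x : ℕ} {m ℓ ℓ₀ : L} {A B : LDCL.Ty L} {b : LDCL.Tm L}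
    (h : LDCL.Typing (Γ₁ ++ [(x, m, A)] ++ Γ₂) b ℓ B)
    (hl : ℓ₀ ≤ ℓ) :
    LDCL.Typing (Γ₁ ++ [(x, ℓ₀ ⊔ m, A)] ++ Γ₂) b ℓ B := by
  have hup := h.upgrade ℓ₀
  rw [sup_eq_right.mpr hl, LDCL.ctxJoin_append, LDCL.ctxJoin_append] at hup
  exact hup.subL (((LDCL.ctxLe_ctxJoin_self ℓ₀ Γ₁).append (LDCL.ctxLe_refl _)).append
    (LDCL.ctxLe_ctxJoin_self ℓ₀ Γ₂))
end
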